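/- The sumset of any canonical collection is direct: if n = a_0 + a_1 + ⋯ = a'_0 + a'_1 + ⋯ are two representations of the same integer n with a_i, a'_i ∈ A_i for all i and all but finitely many terms equal to 0, then a_i = a'_i for every i. -/
import Mathlib


/-- `prodBases b i = b 0 * b 1 * ⋯ * b (i-1)`. -/
def prodBases (b : ℕ → ℤ) (i : ℕ) : ℤ := ∏ j ∈ Finset.range i, b j

/-- The member sets `A i = (b 0 ⋯ b (i-1)) • T i` of a canonical collection. -/
def memberSet (b : ℕ → ℤ) (T : ℕ → Set ℤ) (i : ℕ) : Set ℤ :=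
  (fun t => prodBases b i * t) '' T i

/-- `T` is a complete residue system modulo `m` containing `0`. -/
def IsCompleteResidueSystem (m : ℤ) (T : Set ℤ) : Prop :=
  0 ∈ T ∧ ∀ r : ℤ, ∃! t, t ∈ T ∧ t ≡ r [ZMOD m]

/-- `a` is a representation of `n` in the collection `A`: each `a i ∈ A i`,
all but finitely many `a i` are zero, and `n = Σ_i a i`. -/
def IsRepr (A : ℕ → Set ℤ) (n : ℤ) (a : ℕ → ℤ) : Prop :=
  (∀ i, a i ∈ A i) ∧ (Function.support a).Finite ∧ n = ∑ᶠ i, a i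

/-- The sumset of any canonical collection is direct. -/
theorem sumset_of_canonical_collection_is_direct
    (b : ℕ → ℤ) (T : ℕ → Set ℤ)
    (hb : ∀ i, 1 < b i)
    (hT : ∀ i, IsCompleteResidueSystem (b i) (T i))
    (n : ℤ) (a a' : ℕ → ℤ)
    (h : IsRepr (memberSet b T) n a) (h' : IsRepr (memberSet b T) n a') :
    ∀ i, a i = a' i := by
  classical
  obtain ⟨ha, hfin, hsum⟩ := h
  obtain ⟨ha', hfin', hsum'⟩ := h'
  have hP : ∀ i, 0 < prodBases b i := fun i =>
    Finset.prod_pos fun j _ => lt_trans one_pos (hb j)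
  have hdvd : ∀ i j : ℕ, i ≤ j → prodBases b i ∣ prodBases b j := fun i j hij =>
    Finset.prod_dvd_prod_of_subset _ _ _ (Finset.range_subset_range.mpr hij)
  have hadvd : ∀ j, prodBases b j ∣ a j := fun j => by
    obtain ⟨t, _, ht⟩ := ha j; exact ⟨t, ht.symm⟩
  have ha'dvd : ∀ j, prodBases b j ∣ a' j := fun j => by
    obtain ⟨t, _, ht⟩ := ha' j; exact ⟨t, ht.symm⟩
  intro i
  induction i using Nat.strong_induction_on with
  | _ i IH =>
  set s : Finset ℕ := (hfin.toFinset ∪ hfin'.toFinset) ∪ Finset.range (i + 1) with hs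
  have hsa : Function.support a ⊆ ↑s := fun x hx => by
    simp [hs, Finset.mem_union, hfin.mem_toFinset]; tauto
  have hsa' : Function.support a' ⊆ ↑s := fun x hx => by
    simp [hs, Finset.mem_union, hfin'.mem_toFinset]; tauto
  have hrs : Finset.range (i + 1) ⊆ s := Finset.subset_union_right
  have hfilt : s.filter (fun j => j < i + 1) = Finset.range (i + 1) := by
    ext j
    simp only [Finset.mem_filter, Finset.mem_range]
    exact ⟨fun h => h.2, fun h => ⟨hrs (Finset.mem_range.mpr h), h⟩⟩
  have key : ∀ f : ℕ → ℤ, Function.support f ⊆ ↑s → (∀ j, prodBases b j ∣ f j) →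
      ∃ R : ℤ, prodBases b (i + 1) ∣ R ∧
        (∑ᶠ j, f j) = (∑ j ∈ Finset.range i, f j) + f i + R := by
    intro f hsf hfd
    refine ⟨∑ j ∈ s.filter (fun j => ¬ j < i + 1), f j, ?_, ?_⟩
    · refine Finset.dvd_sum fun j hj => ?_
      have : i + 1 ≤ j := by
        have := (Finset.mem_filter.mp hj).2; omega
      exact (hdvd _ _ this).trans (hfd j)
    · rw [finsum_eq_finset_sum_of_support_subset f hsf,
        ← Finset.sum_filter_add_sum_filter_not s (fun j => j < i + 1) f, hfilt,
        Finset.sum_range_succ]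
  obtain ⟨R, hR, hRe⟩ := key a hsa hadvd
  obtain ⟨R', hR', hRe'⟩ := key a' hsa' ha'dvd
  have hIH : ∑ j ∈ Finset.range i, a j = ∑ j ∈ Finset.range i, a' j :=
    Finset.sum_congr rfl fun j hj => IH j (Finset.mem_range.mp hj)
  have heq : a i + R = a' i + R' := by
    have := hsum.symm.trans hsum'
    rw [hRe, hRe', hIH] at this
    linarith
  have hdiff : prodBases b (i + 1) ∣ a i - a' i := by
    have : a i - a' i = R' - R := by linarith
    rw [this]; exact dvd_sub hR' hR
  obtain ⟨t, ht, hta⟩ := ha i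
  obtain ⟨t', ht', hta'⟩ := ha' i
  rw [← hta, ← hta']
  have hP1 : prodBases b (i + 1) = prodBases b i * b i := by
    simp [prodBases, Finset.prod_range_succ]
  have hbt : b i ∣ t - t' := by
    rw [hP1] at hdiff
    rw [← hta, ← hta', ← mul_sub] at hdiff
    exact (mul_dvd_mul_iff_left (hP i).ne').mp hdiff
  have hmod : t' ≡ t [ZMOD b i] := Int.modEq_iff_dvd.mpr hbt
  have := ((hT i).2 t).unique ⟨ht', hmod⟩ ⟨ht, Int.ModEq.refl t⟩
  rw [this]
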